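/- (Perturbation bound for matrix square roots.) Let C ∈ ℝ^{p×p} be symmetric positive definite and D ∈ ℝ^{p×p} symmetric positive semidefinite. Then, with square roots denoting positive semidefinite matrix square roots, ‖(C+D)^{1/2} − C^{1/2}‖ ≤ (1/2) ‖(C^{1/2})⁻¹‖ · ‖D‖ in spectral norm. -/

import Mathlib

open Matrix MeasureTheory
open scoped Matrix.Norms.L2Operator NNReal RealInnerProductSpace

/-- The ensemble mean `x̄ = (1/M) ∑ᵢ X⁽ⁱ⁾`. -/
noncomputable def ensMean {d M : ℕ} (X : Fin M → EuclideanSpace ℝ (Fin d)) :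
    EuclideanSpace ℝ (Fin d) :=
  (M : ℝ)⁻¹ • ∑ i, X i

/-- The matrix of ensemble deviations, with columns `X⁽ⁱ⁾ − x̄`. -/
noncomputable def devMat {d M : ℕ} (X : Fin M → EuclideanSpace ℝ (Fin d)) :
    Matrix (Fin d) (Fin M) ℝ :=
  Matrix.of fun j i => (X i - ensMean X) j

/-- The trace of the empirical covariance matrix,
`tr(P) = (1/(M−1)) ∑ᵢ ‖X⁽ⁱ⁾ − x̄‖²`. -/
noncomputable def trP {d M : ℕ} (X : Fin M → EuclideanSpace ℝ (Fin d)) : ℝ :=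
  ((M : ℝ) - 1)⁻¹ * ∑ i, ‖X i - ensMean X‖ ^ 2

/-- The positive semidefinite square root of a positive semidefinite matrix
(the definition of `Matrix.PosSemidef.sqrt` in the older Mathlib). -/
noncomputable def Matrix.PosSemidef.sqrt {n 𝕜 : Type*} [Fintype n] [DecidableEq n] [RCLike 𝕜]
    [PartialOrder 𝕜]     {A : Matrix n n 𝕜} (hA : A.PosSemidef) : Matrix n n 𝕜 :=
  hA.1.eigenvectorUnitary.1 * diagonal ((↑) ∘ (√·) ∘ hA.1.eigenvalues) *
    (star hA.1.eigenvectorUnitary : Matrix n n 𝕜)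

/-! With `B = √C`, `A = √(C + D)` and `E = A - B` one has `A * E + E * B = A² - B² = D`.
If `c • 1 ≤ A` and `c • 1 ≤ B`, evaluating this identity on a unit eigenvector of the symmetric
matrix `E` with eigenvalue `μ` gives `2 c |μ| ≤ |vᵀ D v| ≤ ‖D‖`, and `‖E‖` is the largest such
`|μ|`. The constant `c = ‖B⁻¹‖⁻¹` works for `B` because the spectrum of `B⁻¹` is bounded by
`‖B⁻¹‖`, and then for `A` because `c² ≤ B² = C ≤ C + D = A²`. -/

open scoped MatrixOrder

section CFCOrder

variable {A : Type*} [Ring A] [StarRing A] [TopologicalSpace A] [Algebra ℝ A]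
  [ContinuousFunctionalCalculus ℝ A IsSelfAdjoint] [PartialOrder A] [StarOrderedRing A]
  [NonnegSpectrumClass ℝ A]

lemma algebraMap_le_iff_algebraMap_sq_le_sq {a : A} {r : ℝ} (hr : 0 ≤ r) (ha : 0 ≤ a) :
    algebraMap ℝ A r ≤ a ↔ algebraMap ℝ A (r ^ 2) ≤ a ^ 2 := by
  rw [algebraMap_le_iff_le_spectrum (a := a), algebraMap_le_iff_le_spectrum (a := a ^ 2),
    ← cfc_pow_id (R := ℝ) a 2, cfc_map_spectrum (fun x : ℝ => x ^ 2) a, Set.forall_mem_image]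
  exact forall₂_congr fun x hx =>
    (pow_le_pow_iff_left₀ hr (spectrum_nonneg_of_nonneg ha hx) two_ne_zero).symm

lemma algebraMap_le_sqrt_iff [IsSemitopologicalRing A] [T2Space A] {a : A} {r : ℝ} (hr : 0 ≤ r) (ha : 0 ≤ a) :
    algebraMap ℝ A r ≤ CFC.sqrt a ↔ algebraMap ℝ A (r ^ 2) ≤ a := by
  rw [algebraMap_le_iff_algebraMap_sq_le_sq hr (CFC.sqrt_nonneg a), CFC.sq_sqrt a ha]

end CFCOrder

lemma algebraMap_inv_norm_ringInverse_le {A : Type*} [NormedRing A] [NormedAlgebra ℝ A]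
    [CompleteSpace A] [NormOneClass A] [StarRing A]
    [ContinuousFunctionalCalculus ℝ A IsSelfAdjoint] [PartialOrder A] [StarOrderedRing A]
    [NonnegSpectrumClass ℝ A] {b : A} (hb : IsUnit b) (hb0 : 0 ≤ b) :
    algebraMap ℝ A ‖Ring.inverse b‖⁻¹ ≤ b := by
  lift b to Aˣ using hb
  rw [Ring.inverse_unit, algebraMap_le_iff_le_spectrum]
  intro x hx
  have hx0 : 0 < x := (spectrum_nonneg_of_nonneg hb0 hx).lt_of_ne' fun h =>
    spectrum.zero_notMem ℝ b.isUnit (h ▸ hx)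
  have hinv : ‖x⁻¹‖ ≤ ‖(↑b⁻¹ : A)‖ :=
    spectrum.norm_le_norm_of_mem ((spectrum.inv_mem_iff (r := Units.mk0 x hx0.ne') (a := b)).1 hx)
  rw [Real.norm_of_nonneg (inv_nonneg.2 hx0.le)] at hinv
  exact inv_le_of_inv_le₀ hx0 hinv

namespace Matrix

variable {n : Type*} [Fintype n] [DecidableEq n]

lemma PosSemidef.sqrt_eq_cfcSqrt {A : Matrix n n ℝ} (hA : A.PosSemidef) :
    hA.sqrt = CFC.sqrt A := by
  rw [CFC.sqrt_eq_real_sqrt A hA.nonneg, cfcₙ_eq_cfc, hA.1.cfc_eq, IsHermitian.cfc,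
    Unitary.conjStarAlgAut_apply, PosSemidef.sqrt]

lemma IsHermitian.norm_eq_norm_eigenvalues {E : Matrix n n ℝ} (hE : E.IsHermitian) :
    ‖E‖ = ‖hE.eigenvalues‖ := by
  rcases isEmpty_or_nonempty n
  · rw [Subsingleton.elim hE.eigenvalues 0, Subsingleton.elim E 0, norm_zero, norm_zero]
  conv_lhs => rw [hE.spectral_theorem, Unitary.conjStarAlgAut_apply,
    CStarRing.norm_mul_mem_unitary _ (Unitary.star_mem hE.eigenvectorUnitary.2),
    CStarRing.norm_mem_unitary_mul _ hE.eigenvectorUnitary.2, l2_opNorm_diagonal]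
  rfl

lemma abs_dotProduct_mulVec_le (M : Matrix n n ℝ) (x : EuclideanSpace ℝ n) :
    |x ⬝ᵥ M *ᵥ x| ≤ ‖M‖ * ‖x‖ ^ 2 := by
  rw [← inner_toEuclideanCLM, sq, ← mul_assoc, cstar_norm_def]
  exact (abs_real_inner_le_norm _ _).trans <| by
    rw [mul_comm]; gcongr; exact (toEuclideanCLM (𝕜 := ℝ) M).le_opNorm x

lemma mul_dotProduct_self_le_of_algebraMap_le {M : Matrix n n ℝ} {c : ℝ}
    (hM : algebraMap ℝ _ c ≤ M) (x : n → ℝ) : c * (x ⬝ᵥ x) ≤ x ⬝ᵥ M *ᵥ x := by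
  have h := (le_iff.1 hM).dotProduct_mulVec_nonneg x
  rw [star_trivial, sub_mulVec, dotProduct_sub, Algebra.algebraMap_eq_smul_one, smul_mulVec,
    one_mulVec, dotProduct_smul, smul_eq_mul] at h
  linarith

namespace IsHermitian

variable {A B E : Matrix n n ℝ} {c : ℝ}

lemma two_mul_mul_abs_eigenvalues_le (hE : E.IsHermitian) (hA : algebraMap ℝ _ c ≤ A)
    (hB : algebraMap ℝ _ c ≤ B) (i : n) :
    2 * c * |hE.eigenvalues i| ≤ ‖A * E + E * B‖ := by
  set v := hE.eigenvectorBasis i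
  set μ := hE.eigenvalues i
  have hv : ‖v‖ = 1 := hE.eigenvectorBasis.orthonormal.1 i
  have hvv : ⇑v ⬝ᵥ ⇑v = 1 := by
    have h := real_inner_self_eq_norm_sq v
    rwa [hv, one_pow, EuclideanSpace.inner_eq_star_dotProduct, star_trivial] at h
  have hEv : E *ᵥ ⇑v = μ • ⇑v := hE.mulVec_eigenvectorBasis i
  have hvE : ⇑v ᵥ* E = μ • ⇑v := by
    rw [← hEv, ← vecMul_transpose, ← conjTranspose_eq_transpose_of_trivial, hE.eq]
  have hquad : ⇑v ⬝ᵥ (A * E + E * B) *ᵥ ⇑v = μ * (⇑v ⬝ᵥ A *ᵥ ⇑v + ⇑v ⬝ᵥ B *ᵥ ⇑v) := by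
    rw [add_mulVec, dotProduct_add, ← mulVec_mulVec, ← mulVec_mulVec, hEv,
      dotProduct_mulVec ⇑v E, hvE, mulVec_smul, dotProduct_smul, smul_dotProduct, smul_eq_mul,
      smul_eq_mul, mul_add]
  have hcA := mul_dotProduct_self_le_of_algebraMap_le hA ⇑v
  have hcB := mul_dotProduct_self_le_of_algebraMap_le hB ⇑v
  rw [hvv, mul_one] at hcA hcB
  calc 2 * c * |μ| ≤ |μ| * (⇑v ⬝ᵥ A *ᵥ ⇑v + ⇑v ⬝ᵥ B *ᵥ ⇑v) := by
        nlinarith [abs_nonneg μ]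
    _ ≤ |⇑v ⬝ᵥ (A * E + E * B) *ᵥ ⇑v| := by
        rw [hquad, abs_mul]; gcongr; exact le_abs_self _
    _ ≤ ‖A * E + E * B‖ := by
        simpa [hv] using abs_dotProduct_mulVec_le (A * E + E * B) v

lemma two_mul_mul_norm_le (hE : E.IsHermitian) (hA : algebraMap ℝ _ c ≤ A)
    (hB : algebraMap ℝ _ c ≤ B) :
    2 * c * ‖E‖ ≤ ‖A * E + E * B‖ := by
  rcases le_or_gt c 0 with hc | hc
  · exact (mul_nonpos_of_nonpos_of_nonneg (by linarith) (norm_nonneg _)).trans (norm_nonneg _)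
  rw [← le_div_iff₀' (by positivity), hE.norm_eq_norm_eigenvalues,
    pi_norm_le_iff_of_nonneg (by positivity)]
  intro i
  rw [Real.norm_eq_abs, le_div_iff₀' (by positivity)]
  exact hE.two_mul_mul_abs_eigenvalues_le hA hB i

end IsHermitian

end Matrix

/-- perturbation bound for matrix square roots:
`‖(C+D)^{1/2} − C^{1/2}‖ ≤ (1/2) ‖(C^{1/2})⁻¹‖ ‖D‖` in spectral norm. -/
theorem sqrt_perturbation_bound {p : ℕ} (C D : Matrix (Fin p) (Fin p) ℝ)
    (hC : C.PosDef) (hD : D.PosSemidef) :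
    ‖(hC.posSemidef.add hD).sqrt - hC.posSemidef.sqrt‖ ≤
      (1 / 2) * ‖(hC.posSemidef.sqrt)⁻¹‖ * ‖D‖ := by
  nontriviality (Matrix (Fin p) (Fin p) ℝ)
  have hC0 : 0 ≤ C := hC.posSemidef.nonneg
  have hCD : 0 ≤ C + D := (hC.posSemidef.add hD).nonneg
  rw [hC.posSemidef.sqrt_eq_cfcSqrt, (hC.posSemidef.add hD).sqrt_eq_cfcSqrt]
  set B := CFC.sqrt C
  set A := CFC.sqrt (C + D)
  have hBu : IsUnit B := isUnit_of_mul_isUnit_left (y := B) <| by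
    rw [CFC.sqrt_mul_sqrt_self C hC0]; exact hC.isUnit
  have hcB : algebraMap ℝ _ ‖B⁻¹‖⁻¹ ≤ B := by
    rw [nonsing_inv_eq_ringInverse]
    exact algebraMap_inv_norm_ringInverse_le hBu (CFC.sqrt_nonneg C)
  have hcA : algebraMap ℝ _ ‖B⁻¹‖⁻¹ ≤ A := by
    rw [algebraMap_le_sqrt_iff (by positivity) hC0] at hcB
    exact (algebraMap_le_sqrt_iff (by positivity) hCD).2 <|
      hcB.trans (le_add_of_nonneg_right hD.nonneg)
  have hsylvester : A * (A - B) + (A - B) * B = D := by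
    rw [mul_sub, sub_mul, ← sq, ← sq, CFC.sq_sqrt _ hCD, CFC.sq_sqrt _ hC0]; abel
  have hE : (A - B).IsHermitian :=
    (CFC.sqrt_nonneg _).posSemidef.1.sub (CFC.sqrt_nonneg _).posSemidef.1
  have hbound := hE.two_mul_mul_norm_le hcA hcB
  rw [hsylvester] at hbound
  have hpos : 0 < ‖B⁻¹‖ := norm_pos_iff.2 (isUnit_nonsing_inv_iff.2 hBu).ne_zero
  calc ‖A - B‖ = ‖B⁻¹‖ / 2 * (2 * ‖B⁻¹‖⁻¹ * ‖A - B‖) := by field_simp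
    _ ≤ ‖B⁻¹‖ / 2 * ‖D‖ := by gcongr
    _ = 1 / 2 * ‖B⁻¹‖ * ‖D‖ := by ring
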